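/- Let C be a real symmetric positive definite n×n matrix, M a real n×p matrix of full column rank p, W a real (n−p)×n matrix and L a real p×n matrix such that the stacked n×n matrix P := [W; L] is orthogonal (Pᵀ P = P Pᵀ = I_n) and W M = 0. Define C_W := W C Wᵀ, S_W := L C Lᵀ, a_W := W C Lᵀ, S̃_W := (S_W − a_Wᵀ C_W⁻¹ a_W)⁻¹, and K_W := P C Pᵀ. Then for every c ∈ ℝ^n and every ũ ∈ ℝ^p: 1 + ũᵀ (Mᵀ C⁻¹ M)⁻¹ ũ − cᵀ C⁻¹ c = 1 + ũᵀ ((L M)ᵀ S̃_W (L M))⁻¹ ũ − (P c)ᵀ K_W⁻¹ (P c). -/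

import Mathlib

open Matrix

/-!
In the coordinates given by the orthogonal matrix `P = [W; L]` the covariance becomes the block
matrix `K_W = [[C_W, a_W], [a_Wᵀ, S_W]] = P C Pᵀ`, whose inverse is `P C⁻¹ Pᵀ`; this already
matches the `c`-terms. By block inversion `S̃_W`, the inverse of the Schur complement of `C_W`
(invertible because `W` has orthonormal rows), is the bottom-right block `L C⁻¹ Lᵀ` of `K_W⁻¹`.
Finally `Lᵀ L = 1 - Wᵀ W` and `W M = 0` give `Lᵀ L M = M`, so
`(L M)ᵀ S̃_W (L M) = Mᵀ C⁻¹ M`.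
-/

namespace Matrix

variable {m n o k R : Type*}

lemma mulVec_dotProduct_mulVec_mulVec [Fintype m] [Fintype n] [CommSemiring R]
    (P : Matrix n m R) (A : Matrix n n R) (x y : m → R) :
    (P *ᵥ x) ⬝ᵥ A *ᵥ (P *ᵥ y) = x ⬝ᵥ (Pᵀ * A * P) *ᵥ y := by
  rw [mulVec_mulVec, dotProduct_mulVec, dotProduct_mulVec, ← vecMul_transpose, vecMul_vecMul,
    Matrix.mul_assoc]

lemma fromRows_mul_mul_transpose_fromRows [Fintype n] [CommSemiring R] (W : Matrix m n R)
    (L : Matrix o n R) (C : Matrix n n R) :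
    fromRows W L * C * (fromRows W L)ᵀ =
      fromBlocks (W * C * Wᵀ) (W * C * Lᵀ) (L * C * Wᵀ) (L * C * Lᵀ) := by
  rw [fromRows_mul, transpose_fromRows, fromRows_mul_fromCols]

lemma toBlocks₂₂_inv_fromBlocks [Fintype m] [Fintype o] [DecidableEq m] [DecidableEq o]
    [CommRing R] (A : Matrix m m R) (B : Matrix m o R) (C : Matrix o m R) (D : Matrix o o R)
    (hA : IsUnit A.det) (hABCD : IsUnit (fromBlocks A B C D).det) :
    ((fromBlocks A B C D)⁻¹).toBlocks₂₂ = (D - C * A⁻¹ * B)⁻¹ := by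
  let := invertibleOfIsUnitDet A hA
  let := invertibleOfIsUnitDet _ hABCD
  let := invertibleOfFromBlocks₁₁Invertible A B C D
  rw [← invOf_eq_nonsing_inv, invOf_fromBlocks₁₁_eq, toBlocks_fromBlocks₂₂, invOf_eq_nonsing_inv,
    invOf_eq_nonsing_inv]

section Orthogonal

variable [Fintype m] [Fintype n] [DecidableEq m] [DecidableEq n] [CommRing R]
  {P : Matrix m n R} (hP₁ : Pᵀ * P = 1) (hP₂ : P * Pᵀ = 1)
  {C : Matrix n n R} (hC : IsUnit C.det)

include hP₁ hP₂ hC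

lemma mul_mul_transpose_mul_mul_inv_mul_transpose : P * C * Pᵀ * (P * C⁻¹ * Pᵀ) = 1 := by
  calc P * C * Pᵀ * (P * C⁻¹ * Pᵀ) = P * (C * (Pᵀ * P) * C⁻¹) * Pᵀ := by
        simp only [Matrix.mul_assoc]
    _ = 1 := by rw [hP₁, Matrix.mul_one, mul_nonsing_inv C hC, Matrix.mul_one, hP₂]

lemma mulVec_dotProduct_inv_mul_mul_transpose_mulVec (x : n → R) :
    (P *ᵥ x) ⬝ᵥ (P * C * Pᵀ)⁻¹ *ᵥ (P *ᵥ x) = x ⬝ᵥ C⁻¹ *ᵥ x := by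
  rw [inv_eq_right_inv (mul_mul_transpose_mul_mul_inv_mul_transpose hP₁ hP₂ hC),
    mulVec_dotProduct_mulVec_mulVec]
  congr 2
  calc Pᵀ * (P * C⁻¹ * Pᵀ) * P = Pᵀ * P * C⁻¹ * (Pᵀ * P) := by simp only [Matrix.mul_assoc]
    _ = C⁻¹ := by rw [hP₁, Matrix.one_mul, Matrix.mul_one]

end Orthogonal

lemma PosDef.mul_mul_transpose_of_mul_transpose_eq_one [Fintype m] [Fintype n] [DecidableEq m]
    {C : Matrix n n ℝ} (hC : C.PosDef) {W : Matrix m n ℝ} (hW : W * Wᵀ = 1) :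
    (W * C * Wᵀ).PosDef := by
  have hW_inj : Function.Injective W.vecMul := fun x y hxy => by
    simpa [vecMul_vecMul, hW] using congrArg (· ᵥ* Wᵀ) hxy
  simpa [conjTranspose_eq_transpose_of_trivial] using hC.mul_mul_conjTranspose_same hW_inj

section FromRows

variable [Fintype m] [Fintype n] [Fintype o] [DecidableEq n] {W : Matrix m n ℝ} {L : Matrix o n ℝ}

lemma inv_sub_transpose_mul_inv_mul_of_fromRows [DecidableEq m] [DecidableEq o]
    {C : Matrix n n ℝ} (hC : C.PosDef)
    (hP₁ : (fromRows W L)ᵀ * fromRows W L = 1) (hP₂ : fromRows W L * (fromRows W L)ᵀ = 1) :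
    (L * C * Lᵀ - (W * C * Lᵀ)ᵀ * (W * C * Wᵀ)⁻¹ * (W * C * Lᵀ))⁻¹ = L * C⁻¹ * Lᵀ := by
  have hK := mul_mul_transpose_mul_mul_inv_mul_transpose hP₁ hP₂
    ((isUnit_iff_isUnit_det C).mp hC.isUnit)
  have hKdet := isUnit_det_of_right_inverse hK
  rw [fromRows_mul_mul_transpose_fromRows] at hKdet
  have hWW : W * Wᵀ = 1 := by
    rw [transpose_fromRows, fromRows_mul_fromCols, ← fromBlocks_one, fromBlocks_inj] at hP₂
    exact hP₂.1
  have hCW : IsUnit (W * C * Wᵀ).det :=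
    (isUnit_iff_isUnit_det _).mp (hC.mul_mul_transpose_of_mul_transpose_eq_one hWW).isUnit
  have haW : (W * C * Lᵀ)ᵀ = L * C * Wᵀ := by
    simp only [transpose_mul, transpose_transpose, (isHermitian_iff_isSymm.mp hC.isHermitian).eq,
      Matrix.mul_assoc]
  rw [haW, ← toBlocks₂₂_inv_fromBlocks _ _ _ _ hCW hKdet, ← fromRows_mul_mul_transpose_fromRows,
    inv_eq_right_inv hK, fromRows_mul_mul_transpose_fromRows, toBlocks_fromBlocks₂₂]

lemma transpose_mul_mul_of_fromRows [Fintype k] (hP₁ : (fromRows W L)ᵀ * fromRows W L = 1)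
    {M : Matrix n k ℝ} (hWM : W * M = 0) : Lᵀ * L * M = M := by
  rw [transpose_fromRows, fromCols_mul_fromRows] at hP₁
  calc Lᵀ * L * M = (Wᵀ * W + Lᵀ * L) * M - Wᵀ * (W * M) := by
        rw [Matrix.add_mul, Matrix.mul_assoc Wᵀ]; abel
    _ = M := by rw [hP₁, hWM, Matrix.one_mul, Matrix.mul_zero, sub_zero]

lemma transpose_mul_mul_mul_transpose_mul_of_fromRows [Fintype k]
    (hP₁ : (fromRows W L)ᵀ * fromRows W L = 1) {M : Matrix n k ℝ} (hWM : W * M = 0)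
    (X : Matrix n n ℝ) : (L * M)ᵀ * (L * X * Lᵀ) * (L * M) = Mᵀ * X * M :=
  calc (L * M)ᵀ * (L * X * Lᵀ) * (L * M) = (Lᵀ * L * M)ᵀ * X * (Lᵀ * L * M) := by
        simp only [transpose_mul, transpose_transpose, Matrix.mul_assoc]
    _ = Mᵀ * X * M := by rw [transpose_mul_mul_of_fromRows hP₁ hWM]

end FromRows

end Matrix

theorem multilevel_mse_formula_general {n p : ℕ}
    (C : Matrix (Fin n) (Fin n) ℝ) (hC : C.PosDef)
    (M : Matrix (Fin n) (Fin p) ℝ)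
    (W : Matrix (Fin (n - p)) (Fin n) ℝ) (L : Matrix (Fin p) (Fin n) ℝ)
    (hP₁ : (Matrix.fromRows W L)ᵀ * Matrix.fromRows W L = 1)
    (hP₂ : Matrix.fromRows W L * (Matrix.fromRows W L)ᵀ = 1)
    (hWM : W * M = 0) :
    ∀ (c : Fin n → ℝ) (uTilde : Fin p → ℝ),
      letI P := Matrix.fromRows W L
      letI CW := W * C * Wᵀ
      letI SW := L * C * Lᵀ
      letI aW := W * C * Lᵀ
      letI SWtilde := (SW - aWᵀ * CW⁻¹ * aW)⁻¹
      letI KW := P * C * Pᵀ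
      1 + uTilde ⬝ᵥ (Mᵀ * C⁻¹ * M)⁻¹ *ᵥ uTilde - c ⬝ᵥ C⁻¹ *ᵥ c =
        1 + uTilde ⬝ᵥ ((L * M)ᵀ * SWtilde * (L * M))⁻¹ *ᵥ uTilde
          - (P *ᵥ c) ⬝ᵥ KW⁻¹ *ᵥ (P *ᵥ c) := by
  intro c uTilde
  rw [inv_sub_transpose_mul_inv_mul_of_fromRows hC hP₁ hP₂,
    transpose_mul_mul_mul_transpose_mul_of_fromRows hP₁ hWM,
    mulVec_dotProduct_inv_mul_mul_transpose_mulVec hP₁ hP₂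
      ((isUnit_iff_isUnit_det C).mp hC.isUnit)]

/-- Multi-level reformulation of the kriging mean squared error: with `P = [W; L]`
orthogonal, `W M = 0`, `C_W = W C Wᵀ`, `S_W = L C Lᵀ`, `a_W = W C Lᵀ`,
`S̃_W = (S_W − a_Wᵀ C_W⁻¹ a_W)⁻¹` and `K_W = P C Pᵀ`, one has for every `c` and `ũ`:
`1 + ũᵀ (Mᵀ C⁻¹ M)⁻¹ ũ − cᵀ C⁻¹ c
  = 1 + ũᵀ ((L M)ᵀ S̃_W (L M))⁻¹ ũ − (P c)ᵀ K_W⁻¹ (P c)`. -/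
theorem multilevel_mse_formula {n p : ℕ}
    (C : Matrix (Fin n) (Fin n) ℝ) (hC : C.PosDef)
    (M : Matrix (Fin n) (Fin p) ℝ) (hM : Function.Injective M.mulVec)
    (W : Matrix (Fin (n - p)) (Fin n) ℝ) (L : Matrix (Fin p) (Fin n) ℝ)
    (hP₁ : (Matrix.fromRows W L)ᵀ * Matrix.fromRows W L = 1)
    (hP₂ : Matrix.fromRows W L * (Matrix.fromRows W L)ᵀ = 1)
    (hWM : W * M = 0) :
    ∀ (c : Fin n → ℝ) (uTilde : Fin p → ℝ),
      letI P := Matrix.fromRows W L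
      letI CW := W * C * Wᵀ
      letI SW := L * C * Lᵀ
      letI aW := W * C * Lᵀ
      letI SWtilde := (SW - aWᵀ * CW⁻¹ * aW)⁻¹
      letI KW := P * C * Pᵀ
      1 + uTilde ⬝ᵥ (Mᵀ * C⁻¹ * M)⁻¹ *ᵥ uTilde - c ⬝ᵥ C⁻¹ *ᵥ c =
        1 + uTilde ⬝ᵥ ((L * M)ᵀ * SWtilde * (L * M))⁻¹ *ᵥ uTilde
          - (P *ᵥ c) ⬝ᵥ KW⁻¹ *ᵥ (P *ᵥ c) :=
  multilevel_mse_formula_general C hC M W L hP₁ hP₂ hWM
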